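/- If h : ℝ → ℝ is bounded and measurable, then the solution y of the Stein equation satisfies ‖y'‖_∞ ≤ 4‖h‖_∞, where y'(x) := (1−ψ)x y(x) + h(x) − h̄_ψ. -/

import Mathlib

/-!
Write `a = 1 - ψ` and `g = h - h̄_ψ`, so that `|g| ≤ 2C`. Because `h̄_ψ` is the mean of `h` under
the Gaussian with density proportional to `e^{-at²/2}`, the integral of `e^{-at²/2} g` over `ℝ`
vanishes, so the tail `∫_x^∞` equals `-∫_{-∞}^x`; by the reflection `t ↦ -t` it suffices to treat
`x ≥ 0`. There `x ≤ t` on the range of integration and `∫_x^∞ t e^{-at²/2} dt = e^{-ax²/2} / a`,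
whence `a |x| |∫_x^∞ e^{-at²/2} g| ≤ 2C e^{-ax²/2}`, i.e. `|(1 - ψ) x y(x)| ≤ 2C`. Adding
`|h(x) - h̄_ψ| ≤ 2C` gives `4C`.
-/

open MeasureTheory ProbabilityTheory Real Set Filter Topology
open scoped NNReal

noncomputable section

/-- `h̄_ψ = E h(N)` for `N ~ N(0, (1-ψ)⁻¹)`. -/
def gaussMean (ψ : ℝ) (h : ℝ → ℝ) : ℝ :=
  ∫ x, h x ∂(gaussianReal 0 (Real.toNNReal (1 - ψ)⁻¹))

/-- The bounded solution `y` of the Stein equation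
`y'(x) - (1-ψ) x y(x) = h(x) - h̄_ψ`, given explicitly by
`y(x) = -e^{(1-ψ)x²/2} ∫_x^∞ e^{-(1-ψ)t²/2} (h(t) - h̄_ψ) dt`. -/
def steinSol (ψ : ℝ) (h : ℝ → ℝ) (x : ℝ) : ℝ :=
  - Real.exp ((1 - ψ) * x ^ 2 / 2) *
      ∫ t in Set.Ioi x, Real.exp (-((1 - ψ) * t ^ 2 / 2)) * (h t - gaussMean ψ h)

section GaussianTail

variable {a : ℝ}

lemma integrable_exp_neg_mul_sq_div_two (ha : 0 < a) :
    Integrable fun t : ℝ ↦ exp (-(a * t ^ 2 / 2)) :=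
  (integrable_exp_neg_mul_sq (half_pos ha)).congr <| .of_forall fun t ↦ by ring_nf

lemma integrable_mul_exp_neg_mul_sq_div_two (ha : 0 < a) :
    Integrable fun t : ℝ ↦ t * exp (-(a * t ^ 2 / 2)) :=
  (integrable_mul_exp_neg_mul_sq (half_pos ha)).congr <| .of_forall fun t ↦ by ring_nf

lemma tendsto_exp_neg_mul_sq_div_two_atTop (ha : 0 < a) :
    Tendsto (fun t : ℝ ↦ exp (-(a * t ^ 2 / 2))) atTop (𝓝 0) := by
  have hsq : Tendsto (fun t : ℝ ↦ a * t ^ 2 / 2) atTop atTop :=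
    ((tendsto_pow_atTop two_ne_zero).const_mul_atTop ha).atTop_div_const two_pos
  exact tendsto_exp_atBot.comp (tendsto_neg_atTop_atBot.comp hsq)

lemma integral_Ioi_mul_exp_neg_mul_sq_div_two (ha : 0 < a) (x : ℝ) :
    ∫ t in Ioi x, t * exp (-(a * t ^ 2 / 2)) = exp (-(a * x ^ 2 / 2)) / a := by
  have hderiv (t : ℝ) : HasDerivAt (fun t ↦ -(exp (-(a * t ^ 2 / 2)) / a))
      (t * exp (-(a * t ^ 2 / 2))) t := by
    have hexponent : HasDerivAt (fun t : ℝ ↦ -(a * t ^ 2 / 2)) (-(a * t)) t :=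
      (((hasDerivAt_pow 2 t).const_mul a).div_const 2).fun_neg.congr_deriv (by norm_num; ring)
    exact (hexponent.exp.div_const a).fun_neg.congr_deriv (by field_simp)
  rw [integral_Ioi_of_hasDerivAt_of_tendsto' (fun t _ ↦ hderiv t)
    (integrable_mul_exp_neg_mul_sq_div_two ha).integrableOn
    (by simpa using ((tendsto_exp_neg_mul_sq_div_two_atTop ha).div_const a).neg)]
  ring

lemma mul_abs_setIntegral_Ioi_exp_mul_le (ha : 0 < a) {g : ℝ → ℝ} {D : ℝ}
    (hD : ∀ t, |g t| ≤ D) {x : ℝ} (hx : 0 ≤ x) :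
    a * x * |∫ t in Ioi x, exp (-(a * t ^ 2 / 2)) * g t| ≤ D * exp (-(a * x ^ 2 / 2)) := by
  have hpointwise : ∀ t ∈ Ioi x,
      ‖x * (exp (-(a * t ^ 2 / 2)) * g t)‖ ≤ D * (t * exp (-(a * t ^ 2 / 2))) := by
    intro t ht
    rw [Real.norm_eq_abs, abs_mul, abs_mul, abs_of_nonneg hx, abs_of_pos (exp_pos _)]
    calc x * (exp (-(a * t ^ 2 / 2)) * |g t|) ≤ t * (exp (-(a * t ^ 2 / 2)) * D) :=
          mul_le_mul ht.out.le (by gcongr; exact hD t) (by positivity) (hx.trans ht.out.le)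
      _ = D * (t * exp (-(a * t ^ 2 / 2))) := by ring
  have hbound := norm_integral_le_of_norm_le
    ((integrable_mul_exp_neg_mul_sq_div_two ha).integrableOn.const_mul D)
    (ae_restrict_of_forall_mem measurableSet_Ioi hpointwise)
  rw [integral_const_mul, integral_const_mul, integral_Ioi_mul_exp_neg_mul_sq_div_two ha,
    Real.norm_eq_abs, abs_mul, abs_of_nonneg hx] at hbound
  calc a * x * |∫ t in Ioi x, exp (-(a * t ^ 2 / 2)) * g t|
      = a * (x * |∫ t in Ioi x, exp (-(a * t ^ 2 / 2)) * g t|) := by ring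
    _ ≤ a * (D * (exp (-(a * x ^ 2 / 2)) / a)) := by gcongr
    _ = D * exp (-(a * x ^ 2 / 2)) := by field_simp

lemma mul_abs_mul_abs_setIntegral_Ioi_exp_mul_le (ha : 0 < a) {g : ℝ → ℝ} {D : ℝ}
    (hD : ∀ t, |g t| ≤ D) (hint : Integrable fun t ↦ exp (-(a * t ^ 2 / 2)) * g t)
    (hzero : ∫ t, exp (-(a * t ^ 2 / 2)) * g t = 0) (x : ℝ) :
    a * |x| * |∫ t in Ioi x, exp (-(a * t ^ 2 / 2)) * g t| ≤ D * exp (-(a * x ^ 2 / 2)) := by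
  rcases le_total 0 x with hx | hx
  · rw [abs_of_nonneg hx]
    exact mul_abs_setIntegral_Ioi_exp_mul_le ha hD hx
  · have hsplit := intervalIntegral.integral_Iic_add_Ioi (b := x) hint.integrableOn
      hint.integrableOn
    rw [hzero, add_eq_zero_iff_neg_eq] at hsplit
    have hreflect : ∫ t in Iic x, exp (-(a * t ^ 2 / 2)) * g t
        = ∫ t in Ioi (-x), exp (-(a * t ^ 2 / 2)) * g (-t) := by
      have := integral_comp_neg_Ioi (-x) fun t ↦ exp (-(a * t ^ 2 / 2)) * g t
      simp only [neg_neg, neg_sq] at this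
      exact this.symm
    rw [← hsplit, abs_neg, hreflect, abs_of_nonpos hx, ← neg_sq x]
    exact mul_abs_setIntegral_Ioi_exp_mul_le ha (fun t ↦ hD (-t)) (neg_nonneg.mpr hx)

end GaussianTail

lemma integral_gaussianPDFReal_mul_sub_integral (μ : ℝ) {v : ℝ≥0} (hv : v ≠ 0) {f : ℝ → ℝ}
    (hf : Integrable f (gaussianReal μ v)) :
    ∫ x, gaussianPDFReal μ v x * (f x - ∫ y, f y ∂gaussianReal μ v) = 0 := by
  simp_rw [← smul_eq_mul, ← integral_gaussianReal_eq_integral_smul hv]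
  rw [integral_sub hf (integrable_const _), integral_const, probReal_univ, one_smul, sub_self]

lemma exp_neg_mul_sq_div_two_eq_gaussianPDFReal {a : ℝ} (ha : 0 < a) (t : ℝ) :
    exp (-(a * t ^ 2 / 2)) = √(2 * π * a⁻¹) * gaussianPDFReal 0 a⁻¹.toNNReal t := by
  have hsqrt : √(2 * π * a⁻¹) ≠ 0 := by positivity
  rw [gaussianPDFReal, Real.coe_toNNReal _ (inv_nonneg.mpr ha.le), ← mul_assoc,
    mul_inv_cancel₀ hsqrt, one_mul]
  congr 1
  field_simp
  ring

lemma abs_gaussMean_le {ψ C : ℝ} {h : ℝ → ℝ} (hC : ∀ x, |h x| ≤ C) :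
    |gaussMean ψ h| ≤ C := by
  simpa [gaussMean] using norm_integral_le_of_norm_le_const
    (μ := gaussianReal 0 (1 - ψ)⁻¹.toNNReal)
    (.of_forall fun x ↦ (norm_eq_abs (h x)).trans_le (hC x))

lemma integral_exp_mul_sub_gaussMean {ψ : ℝ} (hψ : ψ < 1) {h : ℝ → ℝ} (hmeas : Measurable h)
    {C : ℝ} (hC : ∀ x, |h x| ≤ C) :
    ∫ t, exp (-((1 - ψ) * t ^ 2 / 2)) * (h t - gaussMean ψ h) = 0 := by
  have ha : 0 < 1 - ψ := sub_pos.mpr hψ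
  have hv : (1 - ψ)⁻¹.toNNReal ≠ 0 := by simpa using ha
  have hint : Integrable h (gaussianReal 0 (1 - ψ)⁻¹.toNNReal) :=
    .of_bound hmeas.aestronglyMeasurable C (.of_forall hC)
  simp_rw [exp_neg_mul_sq_div_two_eq_gaussianPDFReal ha, mul_assoc, integral_const_mul]
  rw [gaussMean, integral_gaussianPDFReal_mul_sub_integral 0 hv hint, mul_zero]

lemma abs_mul_steinSol_le {ψ : ℝ} (hψ : ψ < 1) {h : ℝ → ℝ} (hmeas : Measurable h) {C : ℝ}
    (hC : ∀ x, |h x| ≤ C) (x : ℝ) :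
    |(1 - ψ) * x * steinSol ψ h x| ≤ 2 * C := by
  have ha : 0 < 1 - ψ := sub_pos.mpr hψ
  have hg (t : ℝ) : |h t - gaussMean ψ h| ≤ 2 * C := by
    linarith [abs_sub (h t) (gaussMean ψ h), hC t, abs_gaussMean_le (ψ := ψ) hC]
  have hint : Integrable fun t ↦ exp (-((1 - ψ) * t ^ 2 / 2)) * (h t - gaussMean ψ h) :=
    (integrable_exp_neg_mul_sq_div_two ha).mul_bdd
      (hmeas.sub measurable_const).aestronglyMeasurable (.of_forall hg)
  have htail := mul_abs_mul_abs_setIntegral_Ioi_exp_mul_le ha hg hint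
    (integral_exp_mul_sub_gaussMean hψ hmeas hC) x
  calc |(1 - ψ) * x * steinSol ψ h x|
      = exp ((1 - ψ) * x ^ 2 / 2) * ((1 - ψ) * |x| *
          |∫ t in Ioi x, exp (-((1 - ψ) * t ^ 2 / 2)) * (h t - gaussMean ψ h)|) := by
        rw [steinSol, abs_mul, abs_mul, abs_mul, abs_neg, abs_of_pos ha, abs_of_pos (exp_pos _)]
        ring
    _ ≤ exp ((1 - ψ) * x ^ 2 / 2) * (2 * C * exp (-((1 - ψ) * x ^ 2 / 2))) := by gcongr
    _ = 2 * C := by rw [mul_left_comm, ← exp_add, add_neg_cancel, exp_zero, mul_one]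

theorem stmt10_general (ψ : ℝ) (hψ1 : ψ < 1) (h : ℝ → ℝ) (hmeas : Measurable h) (C : ℝ) (hC : ∀ x, |h x| ≤ C) :
    ∀ x : ℝ,
      |(1 - ψ) * x * steinSol ψ h x + h x - gaussMean ψ h| ≤ 4 * C := by
  intro x
  calc |(1 - ψ) * x * steinSol ψ h x + h x - gaussMean ψ h|
      ≤ |(1 - ψ) * x * steinSol ψ h x| + (|h x| + |gaussMean ψ h|) := by
        rw [add_sub_assoc]
        exact (abs_add_le _ _).trans (add_le_add_right (abs_sub _ _) _)
    _ ≤ 2 * C + (C + C) := by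
        gcongr
        exacts [abs_mul_steinSol_le hψ1 hmeas hC x, hC x, abs_gaussMean_le hC]
    _ = 4 * C := by ring

theorem stmt10 (ψ : ℝ) (hψ0 : 0 ≤ ψ) (hψ1 : ψ < 1) (h : ℝ → ℝ) (hmeas : Measurable h) (C : ℝ) (hC : ∀ x, |h x| ≤ C) :
    ∀ x : ℝ,
      |(1 - ψ) * x * steinSol ψ h x + h x - gaussMean ψ h| ≤ 4 * C :=
  stmt10_general ψ hψ1 h hmeas C hC

end
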